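/- For any triangle ABC with all angles less than 120°, there exists a unique point F such that ∠AFB = ∠BFC = ∠CFA = 120°. -/

import Mathlib

/-!
The total distance `f X = ‖X - A‖ + ‖X - B‖ + ‖X - C‖` attains its minimum at some `F`. At a
vertex, say `A`, minimality forces the gradient of `‖X - B‖ + ‖X - C‖`, the sum `u + v` of the unit
vectors from `B` and `C` to `A`, to have norm at most `1`; as `‖u + v‖² = 2 + 2 cos ∠BAC`, this
means `∠BAC ≥ 2π/3`. So `F` is not a vertex, `f` is differentiable at `F`, and its gradient, the
sum of the unit vectors from `A`, `B`, `C` to `F`, vanishes. Three unit vectors sum to zero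
exactly when they pairwise make angles `2π/3`.

Conversely, at any point where these unit vectors sum to zero, the supporting-hyperplane
inequalities of the three norms add up to `f F ≤ f X`, so such a point is a minimizer. The norm
being strictly convex, two distinct minimizers would put `A`, `B`, `C` on the line through them.
-/

open Real RealInnerProductSpace Filter EuclideanGeometry

theorem cos_two_pi_div_three : cos (2 * π / 3) = -(1 / 2) := by
  rw [show 2 * π / 3 = π - π / 3 by ring, cos_pi_sub, cos_pi_div_three]

theorem eq_two_pi_div_three_iff_cos_eq {θ : ℝ} (h₀ : 0 ≤ θ) (hπ : θ ≤ π) :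
    θ = 2 * π / 3 ↔ cos θ = -(1 / 2) := by
  rw [← cos_two_pi_div_three]
  exact (injOn_cos.eq_iff ⟨h₀, hπ⟩ ⟨by positivity, by linarith [pi_pos]⟩).symm

theorem mem_affineSpan_pair_of_sameRay {V : Type*} [AddCommGroup V] [Module ℝ V] {x y z : V}
    (hxy : x ≠ y) (h : SameRay ℝ (x - z) (y - z)) : z ∈ line[ℝ, x, y] := by
  have hcol : Collinear ℝ {z, x, y} := by
    rcases wbtw_total_of_sameRay_vsub_left (x := z) (y := x) (z := y) h with h' | h'
    · exact h'.collinear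
    · rw [Set.pair_comm]
      exact h'.collinear
  exact hcol.mem_affineSpan_of_mem_of_ne (by simp) (by simp) (by simp) hxy

section Normed

variable {E ι : Type*} [NormedAddCommGroup E] [Fintype ι]

theorem exists_forall_sum_norm_sub_le [ProperSpace E] [Nonempty ι] (p : ι → E) :
    ∃ x, ∀ y, ∑ i, ‖x - p i‖ ≤ ∑ i, ‖y - p i‖ := by
  refine Continuous.exists_forall_le (by fun_prop) ?_
  obtain ⟨i⟩ := ‹Nonempty ι›
  refine tendsto_atTop_mono (fun y => ?_)
    (tendsto_norm_cocompact_atTop.atTop_add (tendsto_const_nhds (x := -‖p i‖)))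
  calc ‖y‖ + -‖p i‖ ≤ ‖y - p i‖ := by linarith [norm_sub_norm_le y (p i)]
    _ ≤ ∑ j, ‖y - p j‖ :=
      Finset.single_le_sum (fun j _ => norm_nonneg (y - p j)) (Finset.mem_univ i)

/-- At the midpoint of two minimizers every triangle inequality
`‖(x - p i) + (y - p i)‖ ≤ ‖x - p i‖ + ‖y - p i‖` is an equality. -/
theorem collinear_of_forall_sum_norm_sub_le [NormedSpace ℝ E] [StrictConvexSpace ℝ E]
    {p : ι → E} {x y : E} (hxy : x ≠ y) (hx : ∀ z, ∑ i, ‖x - p i‖ ≤ ∑ i, ‖z - p i‖)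
    (hy : ∀ z, ∑ i, ‖y - p i‖ ≤ ∑ i, ‖z - p i‖) : Collinear ℝ (Set.range p) := by
  set m : E := (2 : ℝ)⁻¹ • (x + y)
  have hm : ∀ i, ‖(x - p i) + (y - p i)‖ = 2 * ‖m - p i‖ := fun i => by
    rw [show (x - p i) + (y - p i) = (2 : ℝ) • (m - p i) by
      rw [smul_sub, smul_inv_smul₀ two_ne_zero, two_smul]; abel, norm_smul, Real.norm_two]
  have hle : ∀ i ∈ Finset.univ, ‖(x - p i) + (y - p i)‖ ≤ ‖x - p i‖ + ‖y - p i‖ :=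
    fun i _ => norm_add_le _ _
  have heq := (Finset.sum_eq_sum_iff_of_le hle).1 <| by
    refine le_antisymm (Finset.sum_le_sum hle) ?_
    rw [Finset.sum_add_distrib, Finset.sum_congr rfl fun i _ => hm i, ← Finset.mul_sum]
    linarith [hx m, hy m]
  rw [collinear_iff_exists_forall_eq_smul_vadd]
  refine ⟨x, y - x, ?_⟩
  rintro _ ⟨i, rfl⟩
  obtain ⟨r, hr⟩ := mem_affineSpan_pair_iff_exists_lineMap_eq.1
    (mem_affineSpan_pair_of_sameRay hxy (sameRay_iff_norm_add.2 (heq i (Finset.mem_univ i))))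
  exact ⟨r, by rw [← hr, AffineMap.lineMap_apply]; rfl⟩

/-- Along each ray from `x`, `f (x + t • v) - f x ≥ -t * ‖v‖`; divide by `t` and let `t → 0⁺`. -/
theorem norm_le_one_of_forall_le_norm_sub_add [NormedSpace ℝ E] {f : E → ℝ} {f' : E →L[ℝ] ℝ}
    {x : E} (hf : HasFDerivAt f f' x) (hmin : ∀ y, f x ≤ ‖y - x‖ + f y) : ‖f'‖ ≤ 1 := by
  have key : ∀ v, -‖v‖ ≤ f' v := fun v => by
    have hline : HasDerivAt (fun t : ℝ => x + t • v) v 0 := by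
      simpa using ((hasDerivAt_id (0 : ℝ)).smul_const v).const_add x
    refine ge_of_tendsto (hf.comp_hasDerivAt_of_eq 0 hline (by simp)).tendsto_slope_zero_right ?_
    filter_upwards [self_mem_nhdsWithin] with t (ht : 0 < t)
    have := hmin (x + t • v)
    simp only [zero_add, zero_smul, add_zero, Function.comp_apply, smul_eq_mul,
      add_sub_cancel_left, norm_smul, norm_of_nonneg ht.le] at this ⊢
    rw [le_inv_mul_iff₀ ht]
    linarith
  refine ContinuousLinearMap.opNorm_le_bound _ zero_le_one fun v => abs_le.2 ⟨?_, ?_⟩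
  · simpa using key v
  · simpa using key (-v)

end Normed

namespace InnerProductGeometry

variable {E : Type*} [NormedAddCommGroup E] [InnerProductSpace ℝ E]

theorem inner_smul_inv_norm_eq_cos_angle (x y : E) :
    ⟪‖x‖⁻¹ • x, ‖y‖⁻¹ • y⟫ = cos (angle x y) := by
  rw [cos_angle, real_inner_smul_left, real_inner_smul_right]
  ring

theorem angle_eq_two_pi_div_three_iff {x y : E} :
    angle x y = 2 * π / 3 ↔ ⟪‖x‖⁻¹ • x, ‖y‖⁻¹ • y⟫ = -(1 / 2) := by
  rw [inner_smul_inv_norm_eq_cos_angle]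
  exact eq_two_pi_div_three_iff_cos_eq (angle_nonneg x y) (angle_le_pi x y)

end InnerProductGeometry

section InnerProduct

variable {E ι : Type*} [NormedAddCommGroup E] [InnerProductSpace ℝ E] [Fintype ι]

/-- `‖v‖⁻¹ • v` is a subgradient of the norm at `v`, also when `v = 0`. -/
theorem norm_add_inner_sub_smul_le (v w : E) : ‖v‖ + ⟪w - v, ‖v‖⁻¹ • v⟫ ≤ ‖w‖ := by
  have hv : ‖v‖⁻¹ * ‖v‖ ≤ 1 := inv_mul_le_one_of_le₀ le_rfl (norm_nonneg v)
  calc ‖v‖ + ⟪w - v, ‖v‖⁻¹ • v⟫ = ‖v‖⁻¹ * ⟪w, v⟫ := by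
        rw [real_inner_smul_right, inner_sub_left, real_inner_self_eq_norm_sq]
        by_cases h : ‖v‖ = 0
        · simp [h]
        · field_simp
          ring
    _ ≤ ‖v‖⁻¹ * (‖w‖ * ‖v‖) := by gcongr; exact real_inner_le_norm w v
    _ ≤ ‖w‖ := by nlinarith [norm_nonneg w]

theorem sum_norm_sub_le_of_sum_smul_eq_zero {p : ι → E} {x : E}
    (h : ∑ i, ‖x - p i‖⁻¹ • (x - p i) = 0) (y : E) :
    ∑ i, ‖x - p i‖ ≤ ∑ i, ‖y - p i‖ := by
  have hy : ∑ i, ⟪y - x, ‖x - p i‖⁻¹ • (x - p i)⟫ = 0 := by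
    rw [← inner_sum, h, inner_zero_right]
  calc ∑ i, ‖x - p i‖ = ∑ i, (‖x - p i‖ + ⟪y - x, ‖x - p i‖⁻¹ • (x - p i)⟫) := by
        rw [Finset.sum_add_distrib, hy, add_zero]
    _ ≤ ∑ i, ‖y - p i‖ := Finset.sum_le_sum fun i _ => by
        simpa using norm_add_inner_sub_smul_le (x - p i) (y - p i)

theorem hasFDerivAt_norm_sub {x a : E} (h : x ≠ a) :
    HasFDerivAt (fun y => ‖y - a‖) (innerSL ℝ (‖x - a‖⁻¹ • (x - a))) x := by
  have hsq := ((hasFDerivAt_id x).sub_const a).norm_sq.sqrt (by simpa [sub_eq_zero] using h)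
  simp only [sqrt_sq (norm_nonneg _), id] at hsq
  refine hsq.congr_fderiv (ContinuousLinearMap.ext fun v => ?_)
  simp only [one_div, mul_inv_rev, map_sub, ContinuousLinearMap.comp_id, smul_apply, sub_apply,
    coe_innerSL_apply, nsmul_eq_mul, Nat.cast_ofNat, smul_eq_mul, map_smul]
  ring

theorem hasFDerivAt_sum_norm_sub {p : ι → E} {x : E} (h : ∀ i, x ≠ p i) :
    HasFDerivAt (fun y => ∑ i, ‖y - p i‖) (innerSL ℝ (∑ i, ‖x - p i‖⁻¹ • (x - p i))) x := by
  rw [map_sum]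
  exact HasFDerivAt.fun_sum fun i _ => hasFDerivAt_norm_sub (h i)

theorem sum_smul_eq_zero_of_forall_sum_norm_sub_le {p : ι → E} {x : E} (h : ∀ i, x ≠ p i)
    (hmin : ∀ y, ∑ i, ‖x - p i‖ ≤ ∑ i, ‖y - p i‖) :
    ∑ i, ‖x - p i‖⁻¹ • (x - p i) = 0 := by
  have h0 := IsLocalMin.hasFDerivAt_eq_zero (Eventually.of_forall hmin)
    (hasFDerivAt_sum_norm_sub h)
  rw [← norm_eq_zero, ← innerSL_apply_norm ℝ, h0, norm_zero]

theorem add_add_eq_zero_iff_inner_eq {a b c : E} (ha : ‖a‖ = 1) (hb : ‖b‖ = 1) (hc : ‖c‖ = 1) :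
    a + b + c = 0 ↔ ⟪a, b⟫ = -(1 / 2) ∧ ⟪b, c⟫ = -(1 / 2) ∧ ⟪c, a⟫ = -(1 / 2) := by
  have pair : ∀ {u v w : E}, ‖u‖ = 1 → ‖v‖ = 1 → ‖w‖ = 1 → u + v + w = 0 →
      ⟪u, v⟫ = -(1 / 2) := by
    intro u v w hu hv hw h
    have := norm_add_sq_real u v
    rw [eq_neg_of_add_eq_zero_left h, norm_neg, hu, hv, hw] at this
    linarith
  constructor
  · intro h
    exact ⟨pair ha hb hc h, pair hb hc ha (by rw [← h]; abel), pair hc ha hb (by rw [← h]; abel)⟩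
  · rintro ⟨hab, hbc, hca⟩
    rw [← inner_self_eq_zero (𝕜 := ℝ)]
    simp only [inner_add_left, inner_add_right, real_inner_self_eq_norm_sq, ha, hb, hc]
    linarith [real_inner_comm a b, real_inner_comm b c, real_inner_comm c a]

theorem ne_of_angle_eq_two_pi_div_three {A B F : E} (h : ∠ A F B = 2 * π / 3) : F ≠ A := by
  rintro rfl
  rw [angle_self_left] at h
  linarith [pi_pos]

theorem angles_eq_two_pi_div_three_iff {A B C F : E} (hA : F ≠ A) (hB : F ≠ B) (hC : F ≠ C) :
    (∠ A F B = 2 * π / 3 ∧ ∠ B F C = 2 * π / 3 ∧ ∠ C F A = 2 * π / 3) ↔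
      ‖F - A‖⁻¹ • (F - A) + ‖F - B‖⁻¹ • (F - B) + ‖F - C‖⁻¹ • (F - C) = 0 := by
  have unit : ∀ {V}, F ≠ V → ‖‖V - F‖⁻¹ • (V - F)‖ = 1 := fun h =>
    norm_smul_inv_norm (sub_ne_zero.2 h.symm)
  rw [← neg_sub A F, ← neg_sub B F, ← neg_sub C F]
  simp only [norm_neg, smul_neg, ← neg_add, neg_eq_zero]
  rw [add_add_eq_zero_iff_inner_eq (unit hA) (unit hB) (unit hC)]
  simp only [EuclideanGeometry.angle, vsub_eq_sub,
    InnerProductGeometry.angle_eq_two_pi_div_three_iff]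

theorem ne_of_angle_lt_of_forall_le {P Q R F : E} (hQ : Q ≠ P) (hR : R ≠ P)
    (h : ∠ Q P R < 2 * π / 3)
    (hF : ∀ X, ‖F - P‖ + ‖F - Q‖ + ‖F - R‖ ≤ ‖X - P‖ + ‖X - Q‖ + ‖X - R‖) : F ≠ P := by
  rintro rfl
  set u := ‖F - Q‖⁻¹ • (F - Q)
  set v := ‖F - R‖⁻¹ • (F - R)
  have hle : ‖u + v‖ ≤ 1 := by
    have hf := (hasFDerivAt_norm_sub hQ.symm).add (hasFDerivAt_norm_sub hR.symm)
    rw [← map_add] at hf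
    have h0 : ‖F - F‖ = 0 := by simp
    have := norm_le_one_of_forall_le_norm_sub_add hf fun X => by
      simp only [Pi.add_apply]
      linarith [hF X, h0]
    rwa [innerSL_apply_norm] at this
  have hcos : -(1 / 2) < ⟪u, v⟫ := by
    rw [InnerProductGeometry.inner_smul_inv_norm_eq_cos_angle, ← neg_sub Q F, ← neg_sub R F,
      InnerProductGeometry.angle_neg_neg, ← cos_two_pi_div_three]
    exact cos_lt_cos_of_nonneg_of_le_pi (InnerProductGeometry.angle_nonneg _ _)
      (by linarith [pi_pos]) h
  have hu : ‖u‖ = 1 := norm_smul_inv_norm (sub_ne_zero.2 hQ.symm)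
  have hv : ‖v‖ = 1 := norm_smul_inv_norm (sub_ne_zero.2 hR.symm)
  have hsq := norm_add_sq_real u v
  rw [hu, hv] at hsq
  nlinarith [norm_nonneg (u + v)]

end InnerProduct

theorem fermat_point_exists_unique
    (A B C : EuclideanSpace ℝ (Fin 2))
    (hncol : ¬ Collinear ℝ ({A, B, C} : Set (EuclideanSpace ℝ (Fin 2))))
    (hA : ∠ B A C < 2 * Real.pi / 3)
    (hB : ∠ A B C < 2 * Real.pi / 3)
    (hC : ∠ B C A < 2 * Real.pi / 3) :
    ∃! F : EuclideanSpace ℝ (Fin 2),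
      ∠ A F B = 2 * Real.pi / 3 ∧ ∠ B F C = 2 * Real.pi / 3 ∧
        ∠ C F A = 2 * Real.pi / 3 := by
  have hAB := ne₁₂_of_not_collinear hncol
  have hAC := ne₁₃_of_not_collinear hncol
  have hBC := ne₂₃_of_not_collinear hncol
  set p := ![A, B, C]
  have hp : ∀ X, ∑ i, ‖X - p i‖ = ‖X - A‖ + ‖X - B‖ + ‖X - C‖ := fun X => Fin.sum_univ_three _
  have hunit : ∀ X, ∑ i, ‖X - p i‖⁻¹ • (X - p i) =
      ‖X - A‖⁻¹ • (X - A) + ‖X - B‖⁻¹ • (X - B) + ‖X - C‖⁻¹ • (X - C) :=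
    fun X => Fin.sum_univ_three _
  obtain ⟨F, hF⟩ := exists_forall_sum_norm_sub_le p
  have hFA := ne_of_angle_lt_of_forall_le hAB.symm hAC.symm hA fun X => by
    linarith [hF X, hp X, hp F]
  have hFB := ne_of_angle_lt_of_forall_le hAB hBC.symm hB fun X => by
    linarith [hF X, hp X, hp F]
  have hFC := ne_of_angle_lt_of_forall_le hBC hAC hC fun X => by
    linarith [hF X, hp X, hp F]
  have hsum := sum_smul_eq_zero_of_forall_sum_norm_sub_le
    (by simp [Fin.forall_fin_succ, p, hFA, hFB, hFC]) hF
  rw [hunit] at hsum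
  refine ⟨F, (angles_eq_two_pi_div_three_iff hFA hFB hFC).2 hsum, fun F' hF' => ?_⟩
  have hsum' := (angles_eq_two_pi_div_three_iff (ne_of_angle_eq_two_pi_div_three hF'.1)
    (ne_of_angle_eq_two_pi_div_three hF'.2.1) (ne_of_angle_eq_two_pi_div_three hF'.2.2)).1 hF'
  by_contra hne
  have hcol := collinear_of_forall_sum_norm_sub_le hne
    (sum_norm_sub_le_of_sum_smul_eq_zero (by rwa [hunit])) hF
  rw [Matrix.range_cons, Matrix.range_cons_cons_empty, Set.singleton_union] at hcol
  exact hncol hcol
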